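/- Let m ≥ 2 be an integer, let p₁ : ℝ → ℝ be 2π-periodic and C², and let u₁ : ℝ → ℝ be 2π-periodic and continuous, and set P₁ := 1 + ε p₁, U₁(t) := t + ε u₁(t), U₁⁺(t) := U₁(t + 2π/m). Then, uniformly in t ∈ ℝ as ε → 0⁺: L_{P₁}(U₁(t), U₁⁺(t))² = 2(1 − cos(2π/m)) + 2ε [ (1 − cos(2π/m)) ( p₁(t) + p₁(t + 2π/m) ) − sin(2π/m) ( u₁(t) − u₁(t + 2π/m) ) − sin(2π/m) ( p₁'(t) − p₁'(t + 2π/m) ) ] + O(ε²). -/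

import Mathlib

open Real

/-- The generating function `L_p(t,t')` of the billiard in the convex domain
with support function `p`. -/
noncomputable def genfun (p : ℝ → ℝ) (t t' : ℝ) : ℝ :=
  Real.sqrt (p t ^ 2 + deriv p t ^ 2 + p t' ^ 2 + deriv p t' ^ 2
    - 2 * p t * p t' * Real.cos (t - t')
    - 2 * p t * deriv p t' * Real.sin (t - t')
    + 2 * deriv p t * p t' * Real.sin (t - t')
    - 2 * deriv p t * deriv p t' * Real.cos (t - t'))

/-!
With `P₁ = 1 + εp₁` the radicand of `L_{P₁}(t, t')` is exactly
`2(1 - cos d) + 2ε[(p + q)(1 - cos d) + (p' - q') sin d] + ε² Q` with `d = t - t'`, where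
`p, p', q, q'` are the values of `p₁, p₁'` at `t, t'` and `Q`, the radicand of `L_{p₁}`, is a sum of
two squares and hence `O(1)`. Along `t = U₁(t₀)`, `t' = U₁⁺(t₀)` one has `d = εv - 2π/m` with
`v = u₁(t₀) - u₁(t₀ + 2π/m)`: replacing `cos d` by its first-order Taylor polynomial in `εv` costs
`O(ε²)`, and moving the arguments of `p₁, p₁'` from `U₁(t₀)` to `t₀` costs `O(ε)` inside a term
that already carries a factor `ε`. The constants are uniform in `t₀` because `p₁, p₁', p₁''` and
`u₁` are continuous and periodic, hence bounded.
-/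

theorem Function.Periodic.deriv {f : ℝ → ℝ} {c : ℝ} (hf : Function.Periodic f c) :
    Function.Periodic (deriv f) c := fun x => by
  rw [← deriv_comp_add_const, show (fun y => f (y + c)) = f from funext hf]

theorem Function.Periodic.exists_pos_abs_le {f : ℝ → ℝ} {c : ℝ} (hf : Function.Periodic f c)
    (hc : c ≠ 0) (hcont : Continuous f) : ∃ M > 0, ∀ x, |f x| ≤ M := by
  obtain ⟨M, hM, hbound⟩ := (hf.isBounded_of_continuous hc hcont).exists_pos_norm_le
  exact ⟨M, hM, fun x => hbound _ ⟨x, rfl⟩⟩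

theorem abs_sub_le_of_abs_deriv_le {f : ℝ → ℝ} {C : ℝ} (hf : Differentiable ℝ f)
    (hC : ∀ x, |deriv f x| ≤ C) (x y : ℝ) : |f y - f x| ≤ C * |y - x| :=
  convex_univ.norm_image_sub_le_of_norm_deriv_le (fun x _ => hf x) (fun x _ => hC x) trivial trivial

theorem abs_add_mul_sub_le_of_abs_deriv_le {f : ℝ → ℝ} {M W ε w : ℝ} (hf : Differentiable ℝ f)
    (hM : ∀ x, |deriv f x| ≤ M) (hε : 0 ≤ ε) (hw : |w| ≤ W) (x : ℝ) :
    |f (x + ε * w) - f x| ≤ M * W * ε := by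
  have hM₀ : 0 ≤ M := (abs_nonneg _).trans (hM x)
  calc |f (x + ε * w) - f x| ≤ M * (ε * |w|) := by
        simpa only [add_sub_cancel_left, abs_mul, abs_of_nonneg hε] using
          abs_sub_le_of_abs_deriv_le hf hM x (x + ε * w)
    _ ≤ M * (ε * W) := by gcongr
    _ = M * W * ε := by ring

theorem exists_pos_abs_le_of_contDiff_two_of_periodic {p : ℝ → ℝ} {c : ℝ} (hp : ContDiff ℝ 2 p)
    (hper : Function.Periodic p c) (hc : c ≠ 0) :
    ∃ M > 0, (∀ x, |p x| ≤ M) ∧ (∀ x, |deriv p x| ≤ M) ∧ ∀ x, |deriv (deriv p) x| ≤ M := by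
  obtain ⟨M₀, hM₀, h₀⟩ := hper.exists_pos_abs_le hc hp.continuous
  obtain ⟨M₁, hM₁, h₁⟩ := hper.deriv.exists_pos_abs_le hc (hp.continuous_deriv (by norm_num))
  obtain ⟨M₂, hM₂, h₂⟩ := hper.deriv.deriv.exists_pos_abs_le hc hp.deriv'.continuous_deriv_one
  refine ⟨M₀ + M₁ + M₂, by positivity, fun x => ?_, fun x => ?_, fun x => ?_⟩
  · linarith [h₀ x]
  · linarith [h₁ x]
  · linarith [h₂ x]

theorem abs_sub_sub_mul_le_of_abs_hasDerivAt_hasDerivAt_le {f f' f'' : ℝ → ℝ} {K : ℝ}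
    (hf : ∀ x, HasDerivAt f (f' x) x) (hf' : ∀ x, HasDerivAt f' (f'' x) x)
    (hK : ∀ x, |f'' x| ≤ K) (x y : ℝ) :
    |f y - f x - f' x * (y - x)| ≤ K * (y - x) ^ 2 := by
  have hK₀ : 0 ≤ K := (abs_nonneg _).trans (hK x)
  -- mean value theorem for `z ↦ f z - f' x * z`, whose derivative is `K|y - x|`-small on `[x, y]`
  have hmvt := (convex_uIcc x y).norm_image_sub_le_of_norm_hasDerivWithin_le
    (f := fun z => f z - f' x * z) (f' := fun z => f' z - f' x) (C := K * |y - x|)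
    (fun z _ => (((hf z).sub ((hasDerivAt_id z).const_mul (f' x))).congr_deriv
      (by simp)).hasDerivWithinAt)
    (fun z hz => (abs_sub_le_of_abs_deriv_le (fun w => (hf' w).differentiableAt)
      (fun w => (hf' w).deriv ▸ hK w) x z).trans
        (mul_le_mul_of_nonneg_left (Set.abs_sub_left_of_mem_uIcc hz) hK₀))
    Set.left_mem_uIcc Set.right_mem_uIcc
  calc |f y - f x - f' x * (y - x)| = |(f y - f' x * y) - (f x - f' x * x)| := by ring_nf
    _ ≤ K * |y - x| * |y - x| := hmvt
    _ = K * (y - x) ^ 2 := by rw [mul_assoc, ← sq, sq_abs]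

theorem abs_cos_sub_sub_mul_sin_le (δ h : ℝ) : |cos (δ - h) - cos δ - h * sin δ| ≤ h ^ 2 := by
  have := abs_sub_sub_mul_le_of_abs_hasDerivAt_hasDerivAt_le (f := cos) (f' := fun x => -sin x)
    (f'' := fun x => -cos x) hasDerivAt_cos (fun x => (hasDerivAt_sin x).neg)
    (fun x => by simpa only [abs_neg] using abs_cos_le_one x) δ (δ - h)
  convert this using 2 <;> ring

noncomputable def genfunSq (a a' b b' d : ℝ) : ℝ :=
  a ^ 2 + a' ^ 2 + b ^ 2 + b' ^ 2 - 2 * a * b * cos d - 2 * a * b' * sin d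
    + 2 * a' * b * sin d - 2 * a' * b' * cos d

theorem genfunSq_eq_sq_add_sq (a a' b b' d : ℝ) :
    genfunSq a a' b b' d =
      (a - b * cos d - b' * sin d) ^ 2 + (a' + b * sin d - b' * cos d) ^ 2 := by
  unfold genfunSq
  linear_combination (-(b ^ 2) - b' ^ 2) * sin_sq_add_cos_sq d

theorem genfunSq_nonneg (a a' b b' d : ℝ) : 0 ≤ genfunSq a a' b b' d := by
  rw [genfunSq_eq_sq_add_sq]
  positivity

theorem genfunSq_le (a a' b b' d : ℝ) :
    genfunSq a a' b b' d ≤ 2 * (a ^ 2 + a' ^ 2 + b ^ 2 + b' ^ 2) := by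
  rw [genfunSq_eq_sq_add_sq]
  nlinarith [sq_nonneg (a + b * cos d + b' * sin d), sq_nonneg (a' - b * sin d + b' * cos d),
    sin_sq_add_cos_sq d]

theorem sq_genfun (p : ℝ → ℝ) (t t' : ℝ) :
    genfun p t t' ^ 2 = genfunSq (p t) (deriv p t) (p t') (deriv p t') (t - t') :=
  sq_sqrt (genfunSq_nonneg _ _ _ _ _)

theorem sq_genfun_one_add_mul {p : ℝ → ℝ} (hp : Differentiable ℝ p) (ε t t' : ℝ) :
    genfun (fun s => 1 + ε * p s) t t' ^ 2 =
      genfunSq (1 + ε * p t) (ε * deriv p t) (1 + ε * p t') (ε * deriv p t') (t - t') := by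
  have hderiv : deriv (fun s => 1 + ε * p s) = fun s => ε * deriv p s := by
    funext s
    simp [hp s]
  rw [sq_genfun, hderiv]

theorem genfunSq_one_add_mul (ε a a' b b' d : ℝ) :
    genfunSq (1 + ε * a) (ε * a') (1 + ε * b) (ε * b') d =
      2 * (1 - cos d) + 2 * ε * ((a + b) * (1 - cos d) + (a' - b') * sin d)
        + ε ^ 2 * genfunSq a a' b b' d := by
  unfold genfunSq
  ring

theorem abs_mul_one_sub_cos_sub_mul_one_sub_cos_le {a b p q δ h K L : ℝ} (hp : |p| ≤ K)
    (hq : |q| ≤ K) (hap : |a - p| ≤ L) (hbq : |b - q| ≤ L) :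
    |(a + b) * (1 - cos (δ - h)) - (p + q) * (1 - cos δ)| ≤ 4 * L + 2 * K * |h| := by
  have hK : 0 ≤ K := (abs_nonneg p).trans hp
  have hL : 0 ≤ L := (abs_nonneg _).trans hap
  have hone : |1 - cos (δ - h)| ≤ 2 := abs_le.mpr
    ⟨by linarith [cos_le_one (δ - h)], by linarith [neg_one_le_cos (δ - h)]⟩
  have hcos : |cos δ - cos (δ - h)| ≤ |h| :=
    (abs_cos_sub_cos_le _ _).trans_eq (by rw [sub_sub_cancel])
  calc _ = |((a - p) + (b - q)) * (1 - cos (δ - h)) + (p + q) * (cos δ - cos (δ - h))| := by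
        ring_nf
    _ ≤ (|a - p| + |b - q|) * |1 - cos (δ - h)| + (|p| + |q|) * |cos δ - cos (δ - h)| := by
        refine (abs_add_le _ _).trans ?_
        rw [abs_mul, abs_mul]
        gcongr <;> exact abs_add_le _ _
    _ ≤ (L + L) * 2 + (K + K) * |h| := by gcongr
    _ = 4 * L + 2 * K * |h| := by ring

theorem abs_mul_sin_sub_mul_sin_le {a' b' p' q' δ h K L : ℝ} (ha' : |a'| ≤ K) (hb' : |b'| ≤ K)
    (hap' : |a' - p'| ≤ L) (hbq' : |b' - q'| ≤ L) :
    |(a' - b') * sin (δ - h) - (p' - q') * sin δ| ≤ 2 * L + 2 * K * |h| := by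
  have hK : 0 ≤ K := (abs_nonneg a').trans ha'
  have hsin : |sin (δ - h) - sin δ| ≤ |h| := (abs_sin_sub_sin_le _ _).trans_eq (by simp)
  calc _ = |((a' - p') - (b' - q')) * sin δ + (a' - b') * (sin (δ - h) - sin δ)| := by ring_nf
    _ ≤ (|a' - p'| + |b' - q'|) * 1 + (|a'| + |b'|) * |sin (δ - h) - sin δ| := by
        refine (abs_add_le _ _).trans ?_
        rw [abs_mul, abs_mul]
        gcongr
        exacts [abs_sub _ _, abs_sin_le_one δ, abs_sub _ _]
    _ ≤ (L + L) * 1 + (K + K) * |h| := by gcongr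
    _ = 2 * L + 2 * K * |h| := by ring

theorem abs_genfunSq_one_add_mul_sub_le {ε a a' b b' p p' q q' v δ K L V : ℝ} (hε : 0 ≤ ε)
    (ha : |a| ≤ K) (ha' : |a'| ≤ K) (hb : |b| ≤ K) (hb' : |b'| ≤ K) (hp : |p| ≤ K)
    (hq : |q| ≤ K) (hap : |a - p| ≤ L * ε) (hbq : |b - q| ≤ L * ε) (hap' : |a' - p'| ≤ L * ε)
    (hbq' : |b' - q'| ≤ L * ε) (hv : |v| ≤ V) :
    |genfunSq (1 + ε * a) (ε * a') (1 + ε * b) (ε * b') (ε * v - δ)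
        - (2 * (1 - cos δ) + 2 * ε * ((1 - cos δ) * (p + q) - sin δ * v - sin δ * (p' - q')))|
      ≤ (2 * V ^ 2 + 12 * L + 8 * K * V + 8 * K ^ 2) * ε ^ 2 := by
  set h := ε * v
  have hh : |h| ≤ V * ε := by
    rw [abs_mul, abs_of_nonneg hε, mul_comm]
    exact mul_le_mul_of_nonneg_right hv hε
  have hK : 0 ≤ K := (abs_nonneg p).trans hp
  have h2ε : |2 * ε| = 2 * ε := abs_of_nonneg (by positivity)
  have hdecomp : genfunSq (1 + ε * a) (ε * a') (1 + ε * b) (ε * b') (h - δ)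
        - (2 * (1 - cos δ) + 2 * ε * ((1 - cos δ) * (p + q) - sin δ * v - sin δ * (p' - q'))) =
      -2 * (cos (δ - h) - cos δ - h * sin δ)
        + 2 * ε * ((a + b) * (1 - cos (δ - h)) - (p + q) * (1 - cos δ))
        + -2 * ε * ((a' - b') * sin (δ - h) - (p' - q') * sin δ)
        + ε ^ 2 * genfunSq a a' b b' (h - δ) := by
    rw [genfunSq_one_add_mul, ← neg_sub δ h, cos_neg, sin_neg]
    ring
  have hcos : |-2 * (cos (δ - h) - cos δ - h * sin δ)| ≤ 2 * V ^ 2 * ε ^ 2 := by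
    calc _ = 2 * |cos (δ - h) - cos δ - h * sin δ| := by rw [abs_mul]; norm_num
      _ ≤ 2 * |h| ^ 2 := by rw [sq_abs]; gcongr; exact abs_cos_sub_sub_mul_sin_le δ h
      _ ≤ 2 * (V * ε) ^ 2 := by gcongr
      _ = 2 * V ^ 2 * ε ^ 2 := by ring
  have hval : |2 * ε * ((a + b) * (1 - cos (δ - h)) - (p + q) * (1 - cos δ))|
      ≤ 2 * ε * (4 * (L * ε) + 2 * K * (V * ε)) := by
    rw [abs_mul, h2ε]
    gcongr
    exact (abs_mul_one_sub_cos_sub_mul_one_sub_cos_le hp hq hap hbq).trans (by gcongr)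
  have hslope : |-2 * ε * ((a' - b') * sin (δ - h) - (p' - q') * sin δ)|
      ≤ 2 * ε * (2 * (L * ε) + 2 * K * (V * ε)) := by
    rw [abs_mul, neg_mul, abs_neg, h2ε]
    gcongr
    exact (abs_mul_sin_sub_mul_sin_le ha' hb' hap' hbq').trans (by gcongr)
  have hquad : |ε ^ 2 * genfunSq a a' b b' (h - δ)| ≤ 8 * K ^ 2 * ε ^ 2 := by
    rw [abs_mul, abs_of_nonneg (genfunSq_nonneg _ _ _ _ _), abs_of_nonneg (by positivity),
      mul_comm]
    gcongr
    have hsq : ∀ x, |x| ≤ K → x ^ 2 ≤ K ^ 2 := fun x hx => by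
      rw [← sq_abs]; exact pow_le_pow_left₀ (abs_nonneg x) hx 2
    linarith [genfunSq_le a a' b b' (h - δ), hsq a ha, hsq a' ha', hsq b hb, hsq b' hb']
  rw [hdecomp]
  refine ((abs_add_le _ _).trans (add_le_add (abs_add_three _ _ _) le_rfl)).trans ?_
  refine (add_le_add (add_le_add (add_le_add hcos hval) hslope) hquad).trans_eq ?_
  ring

theorem stmt_7_general (m : ℕ) (p₁ u₁ : ℝ → ℝ)
    (hp : ContDiff ℝ 2 p₁) (hpper : ∀ t, p₁ (t + 2 * π) = p₁ t)
    (hu : Continuous u₁) (huper : ∀ t, u₁ (t + 2 * π) = u₁ t) :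
    ∃ C > 0, ∃ ε₁ > 0, ∀ ε : ℝ, 0 ≤ ε → ε ≤ ε₁ → ∀ t : ℝ,
      |genfun (fun s => 1 + ε * p₁ s) (t + ε * u₁ t)
            ((t + 2 * π / m) + ε * u₁ (t + 2 * π / m)) ^ 2
        - (2 * (1 - Real.cos (2 * π / m))
            + 2 * ε * ((1 - Real.cos (2 * π / m)) * (p₁ t + p₁ (t + 2 * π / m))
              - Real.sin (2 * π / m) * (u₁ t - u₁ (t + 2 * π / m))
              - Real.sin (2 * π / m) * (deriv p₁ t - deriv p₁ (t + 2 * π / m))))|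
        ≤ C * ε ^ 2 := by
  have h2π : 2 * π ≠ 0 := by positivity
  obtain ⟨P, hP, hP₀, hP₁, hP₂⟩ := exists_pos_abs_le_of_contDiff_two_of_periodic hp hpper h2π
  obtain ⟨U, hU, hUb⟩ := Function.Periodic.exists_pos_abs_le huper h2π hu
  have hp_diff : Differentiable ℝ p₁ := hp.differentiable (by norm_num)
  refine ⟨8 * U ^ 2 + 28 * P * U + 8 * P ^ 2, by positivity, 1, one_pos, fun ε hε _ t => ?_⟩
  have hshift {f : ℝ → ℝ} (hf : Differentiable ℝ f) (hM : ∀ x, |deriv f x| ≤ P) (x : ℝ) :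
      |f (x + ε * u₁ x) - f x| ≤ P * U * ε :=
    abs_add_mul_sub_le_of_abs_deriv_le hf hM hε (hUb x) x
  have hdp_diff : Differentiable ℝ (deriv p₁) := hp.differentiable_deriv_two
  rw [sq_genfun_one_add_mul hp_diff, show t + ε * u₁ t - (t + 2 * π / m + ε * u₁ (t + 2 * π / m))
    = ε * (u₁ t - u₁ (t + 2 * π / m)) - 2 * π / m by ring]
  refine (abs_genfunSq_one_add_mul_sub_le hε (hP₀ _) (hP₁ _) (hP₀ _) (hP₁ _) (hP₀ _) (hP₀ _)
    (hshift hp_diff hP₁ _) (hshift hp_diff hP₁ _) (hshift hdp_diff hP₂ _)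
    (hshift hdp_diff hP₂ _)
    ((abs_sub _ _).trans (add_le_add (hUb _) (hUb _)))).trans_eq ?_
  ring

/-- First-order expansion of the squared generating function along the perturbed
circle: with `P₁ = 1 + εp₁`, `U₁(t) = t + εu₁(t)`, `U₁⁺(t) = U₁(t + 2π/m)`,
`L_{P₁}(U₁(t),U₁⁺(t))² = 2(1 − cos(2π/m)) + 2ε[...] + O(ε²)` uniformly in `t`. -/
theorem stmt_7 (m : ℕ) (hm : 2 ≤ m) (p₁ u₁ : ℝ → ℝ)
    (hp : ContDiff ℝ 2 p₁) (hpper : ∀ t, p₁ (t + 2 * π) = p₁ t)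
    (hu : Continuous u₁) (huper : ∀ t, u₁ (t + 2 * π) = u₁ t) :
    ∃ C > 0, ∃ ε₁ > 0, ∀ ε : ℝ, 0 ≤ ε → ε ≤ ε₁ → ∀ t : ℝ,
      |genfun (fun s => 1 + ε * p₁ s) (t + ε * u₁ t)
            ((t + 2 * π / m) + ε * u₁ (t + 2 * π / m)) ^ 2
        - (2 * (1 - Real.cos (2 * π / m))
            + 2 * ε * ((1 - Real.cos (2 * π / m)) * (p₁ t + p₁ (t + 2 * π / m))
              - Real.sin (2 * π / m) * (u₁ t - u₁ (t + 2 * π / m))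
              - Real.sin (2 * π / m) * (deriv p₁ t - deriv p₁ (t + 2 * π / m))))|
        ≤ C * ε ^ 2 :=
  stmt_7_general m p₁ u₁ hp hpper hu huper
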